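/- Let m11, m12, n11, n21, n22 and R1, R2 be nonnegative real numbers such that R1 ≤ m11, R1 ≤ n11, R2 ≤ m12 + n22, R1 + R2 ≤ max(m11, m12) + n22, and R1 + R2 ≤ max(n21, n22) + (n11 − n21)^+. Then R2 ≤ m'12(R1) + n'22(R1). -/

import Mathlib

/-!
Writing `a⁺ = max a 0`, both `max n21 n22 + (n11 - n21)⁺` and `max n11 n21 + (n22 - n21)⁺`
equal `n21 + (n11 - n21)⁺ + (n22 - n21)⁺`, so the last hypothesis says `R1 + R2 ≤ N` for the
quantity `N` inside `n'22(R1)`. The right-hand side is the least of the four sums obtained by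
picking one argument from each `min`: two are bounded by the hypotheses on `R2` and `R1 + R2`,
and the other two by `R1 + R2 ≤ N` together with `R1 ≤ max m11 m12` and `0 ≤ m12`.
-/

theorem max_add_max_sub_zero_comm {α : Type*} [AddCommGroup α] [LinearOrder α]
    [IsOrderedAddMonoid α] (a b c : α) :
    max b c + max (a - b) 0 = max a b + max (c - b) 0 := by
  have max_sub_zero : ∀ x : α, max (x - b) 0 = max x b - b := fun x => by
    rw [← max_sub_sub_right, sub_self]
  rw [max_sub_zero, max_sub_zero, max_comm b c]
  abel

theorem le_min_add_min {α : Type*} [Add α] [LinearOrder α] {x a b c d : α}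
    (hac : x ≤ a + c) (had : x ≤ a + d) (hbc : x ≤ b + c) (hbd : x ≤ b + d) :
    x ≤ min a b + min c d := by
  rcases min_cases a b with ⟨ha, -⟩ | ⟨hb, -⟩ <;>
  rcases min_cases c d with ⟨hc, -⟩ | ⟨hd, -⟩ <;>
  simp only [*]

theorem dzs_decomposition_third_bound_general
    (m11 m12 n11 n21 n22 R1 R2 : ℝ)
    (hm12 : 0 ≤ m12)
    (h1 : R1 ≤ m11)
    (h4 : R2 ≤ m12 + n22)
    (h6 : R1 + R2 ≤ max m11 m12 + n22)
    (h10 : R1 + R2 ≤ max n21 n22 + max (n11 - n21) 0) :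
    R2 ≤ min (max m11 m12 - R1) m12
           + min (max n11 n21 + max (n22 - n21) 0 - R1) n22 := by
  have hN : R1 + R2 ≤ max n11 n21 + max (n22 - n21) 0 :=
    h10.trans_eq (max_add_max_sub_zero_comm n11 n21 n22)
  have hM : R1 ≤ max m11 m12 := h1.trans (le_max_left _ _)
  apply le_min_add_min <;> linarith

theorem dzs_decomposition_third_bound
    (m11 m12 n11 n21 n22 R1 R2 : ℝ)
    (hm11 : 0 ≤ m11) (hm12 : 0 ≤ m12)
    (hn11 : 0 ≤ n11) (hn21 : 0 ≤ n21) (hn22 : 0 ≤ n22)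
    (hR1 : 0 ≤ R1) (hR2 : 0 ≤ R2)
    (h1 : R1 ≤ m11)
    (h7 : R1 ≤ n11)
    (h4 : R2 ≤ m12 + n22)
    (h6 : R1 + R2 ≤ max m11 m12 + n22)
    (h10 : R1 + R2 ≤ max n21 n22 + max (n11 - n21) 0) :
    R2 ≤ min (max m11 m12 - R1) m12
           + min (max n11 n21 + max (n22 - n21) 0 - R1) n22 :=
  dzs_decomposition_third_bound_general m11 m12 n11 n21 n22 R1 R2 hm12 h1 h4 h6 h10
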